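/- arXiv:2110.01359 — 5 statements merged into one kernel-verified Lean document; each statement's English description precedes it below -/
import Mathlib

section
/- Let x₁, …, xₙ be pairwise distinct points in ℝ^d and let γ > 0. Then the Gaussian radial basis function matrix M with entries M_{ij} = exp(−γ·‖xᵢ − xⱼ‖²) is positive definite; in particular M is invertible (its determinant is nonzero). -/
open MeasureTheory Matrix Real
open scoped RealInnerProductSpace

/-!
Completing the square (the parallelogram law) gives
`∫ exp (-2γ‖xᵢ - t‖²) exp (-2γ‖xⱼ - t‖²) dt = C · exp (-γ‖xᵢ - xⱼ‖²)`
with `C = ∫ exp (-4γ‖t‖²) dt > 0`, so the matrix is a positive multiple of the `L²` Gram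
matrix of the Gaussians `gᵢ = exp (-2γ‖xᵢ - ·‖²)`. This Gram matrix is positive definite
because the `gᵢ` are continuous and linearly independent:
`gᵢ(t) = exp (-2γ‖xᵢ‖²) · exp (4γ⟪xᵢ, t⟫) · exp (-2γ‖t‖²)`, and the functions
`t ↦ exp (4γ⟪xᵢ, t⟫)` are distinct characters of `(ℝᵈ, +)`.
-/

section IntegralGram

variable {ι X : Type*} [Fintype ι] {f : ι → X → ℝ}

theorem sq_sum_mul_eq_sum_sum (c : ι → ℝ) (t : X) :
    (∑ i, c i * f i t) ^ 2 = ∑ i, ∑ j, c i * c j * (f i t * f j t) := by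
  simp_rw [sq, Finset.sum_mul_sum, mul_mul_mul_comm]

variable [MeasurableSpace X] {μ : Measure X}

theorem integrable_sq_sum_mul (hint : ∀ i j, Integrable (fun t => f i t * f j t) μ)
    (c : ι → ℝ) : Integrable (fun t => (∑ i, c i * f i t) ^ 2) μ := by
  simp_rw [sq_sum_mul_eq_sum_sum]
  exact integrable_finsetSum _ fun i _ => integrable_finsetSum _ fun j _ =>
    (hint i j).const_mul _

theorem dotProduct_mulVec_integral_mul
    (hint : ∀ i j, Integrable (fun t => f i t * f j t) μ) (c : ι → ℝ) :
    c ⬝ᵥ (of (fun i j => ∫ t, f i t * f j t ∂μ) *ᵥ c) = ∫ t, (∑ i, c i * f i t) ^ 2 ∂μ := by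
  simp_rw [sq_sum_mul_eq_sum_sum]
  rw [integral_finsetSum _ fun i _ => integrable_finsetSum _ fun j _ => (hint i j).const_mul _]
  simp_rw [integral_finsetSum _ fun j _ => (hint _ j).const_mul _, integral_const_mul,
    dotProduct, mulVec, dotProduct, Finset.mul_sum, of_apply]
  exact Finset.sum_congr rfl fun i _ => Finset.sum_congr rfl fun j _ => by ring

variable [TopologicalSpace X] [μ.IsOpenPosMeasure]

theorem integral_sq_pos_of_continuous {F : X → ℝ} (hF : Continuous F)
    (hint : Integrable (fun t => F t ^ 2) μ) (hne : F ≠ 0) : 0 < ∫ t, F t ^ 2 ∂μ := by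
  rw [integral_pos_iff_support_of_nonneg (fun t => sq_nonneg (F t)) hint]
  obtain ⟨t₀, ht₀⟩ := Function.ne_iff.mp hne
  exact (isOpen_ne_fun (hF.pow 2) continuous_const).measure_pos μ ⟨t₀, by simpa using ht₀⟩

theorem posDef_integral_mul_of_linearIndependent (hcont : ∀ i, Continuous (f i))
    (hint : ∀ i j, Integrable (fun t => f i t * f j t) μ) (hli : LinearIndependent ℝ f) :
    (of fun i j => ∫ t, f i t * f j t ∂μ).PosDef := by
  refine posDef_iff_dotProduct_mulVec.mpr ⟨?_, fun c hc => ?_⟩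
  · ext i j
    simp only [conjTranspose_apply, of_apply, star_trivial, mul_comm]
  rw [star_trivial, dotProduct_mulVec_integral_mul hint]
  refine integral_sq_pos_of_continuous (by fun_prop) (integrable_sq_sum_mul hint c) fun h => hc ?_
  have hsum : ∑ i, c i • f i = 0 := by
    ext t
    simpa using congrFun h t
  exact funext (Fintype.linearIndependent_iff.mp hli c hsum)

end IntegralGram

section Gaussian

variable {ι E : Type*} [NormedAddCommGroup E] [InnerProductSpace ℝ E]

theorem linearIndependent_exp_inner {a : ι → E} (ha : Function.Injective a) :
    LinearIndependent ℝ fun i (t : E) => rexp ⟪a i, t⟫ := by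
  let φ : ι → Multiplicative E →* ℝ := fun i =>
    { toFun := fun t => rexp ⟪a i, t.toAdd⟫
      map_one' := by simp
      map_mul' := fun s t => by simp only [toAdd_mul, inner_add_right, exp_add] }
  have hφ : Function.Injective φ := fun i j hij => ha <| ext_inner_right ℝ fun t =>
    exp_injective (DFunLike.congr_fun hij (.ofAdd t))
  exact (linearIndependent_monoidHom (Multiplicative E) ℝ).comp φ hφ

theorem exp_neg_mul_norm_sub_sq (b : ℝ) (u t : E) :
    rexp (-b * ‖u - t‖ ^ 2) =
      rexp (-b * ‖u‖ ^ 2) * (rexp ⟪(2 * b) • u, t⟫ * rexp (-b * ‖t‖ ^ 2)) := by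
  rw [← exp_add, ← exp_add, norm_sub_sq_real, real_inner_smul_left]
  ring_nf

theorem linearIndependent_gaussian_translates {b : ℝ} (hb : b ≠ 0) {x : ι → E}
    (hx : Function.Injective x) :
    LinearIndependent ℝ fun i (t : E) => rexp (-b * ‖x i - t‖ ^ 2) := by
  have hexp : LinearIndependent ℝ fun i (t : E) => rexp ⟪(2 * b) • x i, t⟫ :=
    linearIndependent_exp_inner ((smul_right_injective E (by simpa using hb)).comp hx)
  have hmul : Function.Injective (LinearMap.mulRight ℝ fun t : E => rexp (-b * ‖t‖ ^ 2)) :=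
    fun f g hfg => funext fun t => by simpa [exp_ne_zero] using congrFun hfg t
  simp_rw [exp_neg_mul_norm_sub_sq b]
  exact (hexp.map' _ (LinearMap.ker_eq_bot.mpr hmul)).units_smul
    fun i => Units.mk0 (rexp (-b * ‖x i‖ ^ 2)) (exp_ne_zero _)

theorem exp_mul_exp_neg_mul_norm_sub_sq (γ : ℝ) (u v t : E) :
    rexp (-(2 * γ) * ‖u - t‖ ^ 2) * rexp (-(2 * γ) * ‖v - t‖ ^ 2) =
      rexp (-γ * ‖u - v‖ ^ 2) * rexp (-(4 * γ) * ‖t - midpoint ℝ u v‖ ^ 2) := by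
  have hpar := parallelogram_law_with_norm ℝ (u - t) (v - t)
  rw [show u - t + (v - t) = -((2 : ℝ) • (t - midpoint ℝ u v)) by
      rw [midpoint_eq_smul_add, invOf_eq_inv]; module,
    sub_sub_sub_cancel_right, norm_neg, norm_smul, Real.norm_ofNat, mul_pow] at hpar
  rw [← exp_add, ← exp_add]
  congr 1
  linear_combination γ * hpar

theorem integral_exp_mul_exp_neg_mul_norm_sub_sq [MeasurableSpace E] [MeasurableAdd E]
    (μ : Measure E) [μ.IsAddRightInvariant] (γ : ℝ) (u v : E) :
    ∫ t, rexp (-(2 * γ) * ‖u - t‖ ^ 2) * rexp (-(2 * γ) * ‖v - t‖ ^ 2) ∂μ =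
      rexp (-γ * ‖u - v‖ ^ 2) * ∫ t, rexp (-(4 * γ) * ‖t‖ ^ 2) ∂μ := by
  simp_rw [exp_mul_exp_neg_mul_norm_sub_sq γ u v, integral_const_mul,
    integral_sub_right_eq_self (fun t => rexp (-(4 * γ) * ‖t‖ ^ 2))]

variable [FiniteDimensional ℝ E] [MeasurableSpace E] [BorelSpace E]

theorem integrable_exp_neg_mul_sq_norm {b : ℝ} (hb : 0 < b) :
    Integrable fun v : E => rexp (-b * ‖v‖ ^ 2) := by
  refine (GaussianFourier.integrable_cexp_neg_mul_sq_norm_add (V := E) (b := b)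
    (by simpa using hb) 0 0).norm.congr (.of_forall fun v => ?_)
  norm_cast
  simp [abs_of_pos (exp_pos _)]

theorem integrable_exp_mul_exp_neg_mul_norm_sub_sq {γ : ℝ} (hγ : 0 < γ) (u v : E) :
    Integrable fun t => rexp (-(2 * γ) * ‖u - t‖ ^ 2) * rexp (-(2 * γ) * ‖v - t‖ ^ 2) := by
  simp_rw [exp_mul_exp_neg_mul_norm_sub_sq γ u v]
  exact ((integrable_exp_neg_mul_sq_norm (by positivity)).comp_sub_right _).const_mul _

end Gaussian

/-- the Gaussian RBF matrix `M i j = exp (−γ ‖xᵢ − xⱼ‖²)` built from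
pairwise distinct points is positive definite; in particular its determinant is nonzero. -/
theorem gaussianRBF_posDef {n d : ℕ} (x : Fin n → EuclideanSpace ℝ (Fin d))
    (hx : Function.Injective x) (γ : ℝ) (hγ : 0 < γ) :
    (Matrix.of fun i j : Fin n => Real.exp (-γ * ‖x i - x j‖ ^ 2)).PosDef ∧
      (Matrix.of fun i j : Fin n => Real.exp (-γ * ‖x i - x j‖ ^ 2)).det ≠ 0 := by
  set C := ∫ t : EuclideanSpace ℝ (Fin d), rexp (-(4 * γ) * ‖t‖ ^ 2)
  have hC : 0 < C := integral_exp_pos (integrable_exp_neg_mul_sq_norm (by positivity))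
  have hgram := posDef_integral_mul_of_linearIndependent (μ := volume)
    (f := fun i t => rexp (-(2 * γ) * ‖x i - t‖ ^ 2)) (fun i => by fun_prop)
    (fun i j => integrable_exp_mul_exp_neg_mul_norm_sub_sq hγ (x i) (x j))
    (linearIndependent_gaussian_translates (by positivity) hx)
  have hM : (Matrix.of fun i j : Fin n => Real.exp (-γ * ‖x i - x j‖ ^ 2)) =
      C⁻¹ • of fun i j =>
        ∫ t, rexp (-(2 * γ) * ‖x i - t‖ ^ 2) * rexp (-(2 * γ) * ‖x j - t‖ ^ 2) := by
    ext i j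
    rw [Matrix.smul_apply, of_apply, of_apply, integral_exp_mul_exp_neg_mul_norm_sub_sq,
      smul_eq_mul, mul_left_comm, inv_mul_cancel₀ hC.ne', mul_one]
  have hpd := hM ▸ hgram.smul (inv_pos.mpr hC)
  exact ⟨hpd, hpd.det_pos.ne'⟩
end

section
/- Let x₁, …, xₙ be pairwise distinct points in ℝ^d, let γ > 0, and let y₁, …, yₙ be arbitrary real labels. Then there exist unique weights w₁, …, wₙ ∈ ℝ such that the Gaussian radial basis function interpolant s(x) = Σᵢ wᵢ·exp(−γ·‖x − xᵢ‖²) exactly matches the labels: s(xⱼ) = yⱼ for every j = 1, …, n. -/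
/-!
Since `‖a - b‖² = ‖a‖² + ‖b‖² - 2⟪a, b⟫`, the Gaussian kernel matrix is a diagonal congruence of
`K = (exp (2γ⟪xᵢ, xⱼ⟫))ᵢⱼ`. Expanding the exponential, `bᵀ K b = ∑ₖ (2γ)ᵏ / k! ‖∑ᵢ bᵢ xᵢ^⊗k‖²` is a
series of nonnegative terms. If it vanishes, every tensor moment `∑ᵢ bᵢ xᵢ^⊗k` vanishes, hence so
does `∑ᵢ bᵢ ⟪xᵢ, v⟫ᵏ` for every `v`. Choosing `v` so that the numbers `⟪xᵢ, v⟫` are distinct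
(a real vector space is not a finite union of proper subspaces), the Vandermonde determinant
forces `b = 0`. So the interpolation matrix is positive definite, hence invertible.
-/

open Function Matrix Real Nat

open scoped RealInnerProductSpace

theorem exists_injective_inner {ι E : Type*} [Finite ι] [NormedAddCommGroup E]
    [InnerProductSpace ℝ E] {x : ι → E} (hx : Injective x) :
    ∃ v : E, Injective fun i => ⟪x i, v⟫ := by
  by_contra! h
  obtain ⟨⟨⟨i, j⟩, hij⟩, htop⟩ := Subspace.exists_eq_top_of_iUnion_eq_univ
      (p := fun q : {q : ι × ι // q.1 ≠ q.2} => (ℝ ∙ (x q.1.1 - x q.1.2))ᗮ) <| by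
    refine Set.eq_univ_of_forall fun v => ?_
    obtain ⟨i, j, hv, hij⟩ := not_injective_iff.mp (h v)
    exact Set.mem_iUnion.2 ⟨⟨(i, j), hij⟩, by
      simp [Submodule.mem_orthogonal_singleton_iff_inner_right, inner_sub_left, hv]⟩
  simp only [Submodule.orthogonal_eq_top_iff, Submodule.span_singleton_eq_bot, sub_eq_zero] at htop
  exact hij (hx htop)

theorem eq_zero_of_forall_sum_mul_pow_eq_zero {ι R : Type*} [Fintype ι] [CommRing R] [IsDomain R]
    {t b : ι → R} (ht : Injective t) (hb : ∀ k : ℕ, ∑ i, b i * t i ^ k = 0) : b = 0 := by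
  let e := Fintype.equivFin ι
  have : b ∘ e.symm = 0 := eq_zero_of_forall_pow_sum_mul_pow_eq_zero (ht.comp e.symm.injective)
    fun k => by simpa [← e.symm.sum_comp] using hb k
  simpa [comp_assoc] using congr($this ∘ e)

namespace EuclideanSpace

variable {ι κ : Type*} [Fintype ι] [Fintype κ]

theorem inner_pow_eq_sum (a c : EuclideanSpace ℝ κ) (k : ℕ) :
    ⟪a, c⟫ ^ k = ∑ p : Fin k → κ, (∏ s, a (p s)) * ∏ s, c (p s) := by
  simp only [PiLp.inner_apply, RCLike.inner_apply, conj_trivial, Finset.sum_pow',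
    Fintype.piFinset_univ, ← Finset.prod_mul_distrib, mul_comm]

/-- The coordinates of the tensor `∑ᵢ bᵢ xᵢ^⊗k`. -/
def tensorMoment (x : ι → EuclideanSpace ℝ κ) (b : ι → ℝ) (k : ℕ) (p : Fin k → κ) : ℝ :=
  ∑ i, b i * ∏ s, x i (p s)

theorem sum_mul_inner_pow (x : ι → EuclideanSpace ℝ κ) (b : ι → ℝ) (k : ℕ)
    (v : EuclideanSpace ℝ κ) :
    ∑ i, b i * ⟪x i, v⟫ ^ k = ∑ p, tensorMoment x b k p * ∏ s, v (p s) := by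
  simp only [inner_pow_eq_sum, tensorMoment, Finset.mul_sum, Finset.sum_mul, mul_assoc]
  exact Finset.sum_comm

theorem sum_sum_mul_inner_pow (x : ι → EuclideanSpace ℝ κ) (b : ι → ℝ) (k : ℕ) :
    ∑ i, ∑ j, b i * b j * ⟪x i, x j⟫ ^ k = ∑ p, tensorMoment x b k p ^ 2 := by
  calc ∑ i, ∑ j, b i * b j * ⟪x i, x j⟫ ^ k = ∑ j, b j * ∑ i, b i * ⟪x i, x j⟫ ^ k := by
        rw [Finset.sum_comm]
        simp only [Finset.mul_sum]
        exact Finset.sum_congr rfl fun j _ => Finset.sum_congr rfl fun i _ => by ring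
    _ = ∑ p, tensorMoment x b k p ^ 2 := by
        simp only [sum_mul_inner_pow, Finset.mul_sum, sq]
        rw [Finset.sum_comm]
        refine Finset.sum_congr rfl fun p _ => ?_
        rw [tensorMoment, Finset.sum_mul]
        exact Finset.sum_congr rfl fun j _ => by ring

theorem hasSum_sum_sum_mul_exp_inner (x : ι → EuclideanSpace ℝ κ) (b : ι → ℝ) (c : ℝ) :
    HasSum (fun k => c ^ k / k ! * ∑ p, tensorMoment x b k p ^ 2)
      (∑ i, ∑ j, b i * b j * exp (c * ⟪x i, x j⟫)) := by
  have hterm (k : ℕ) : c ^ k / k ! * ∑ p, tensorMoment x b k p ^ 2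
      = ∑ i, ∑ j, b i * b j * ((c * ⟪x i, x j⟫) ^ k / k !) := by
    rw [← sum_sum_mul_inner_pow, Finset.mul_sum]
    refine Finset.sum_congr rfl fun i _ => ?_
    rw [Finset.mul_sum]
    exact Finset.sum_congr rfl fun j _ => by ring
  simp only [hterm]
  refine hasSum_sum fun i _ => hasSum_sum fun j _ => .mul_left _ ?_
  rw [exp_eq_exp_ℝ]
  exact NormedSpace.expSeries_div_hasSum_exp _

theorem posDef_exp_inner {x : ι → EuclideanSpace ℝ κ} (hx : Injective x) {c : ℝ} (hc : 0 < c) :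
    (of fun i j => exp (c * ⟪x i, x j⟫)).PosDef := by
  refine .of_dotProduct_mulVec_pos ?_ fun b hb => ?_
  · ext i j
    simp [real_inner_comm]
  have hQ : star b ⬝ᵥ (of fun i j => exp (c * ⟪x i, x j⟫)) *ᵥ b
      = ∑ i, ∑ j, b i * b j * exp (c * ⟪x i, x j⟫) := by
    simp only [dotProduct, mulVec, star_trivial, of_apply, Finset.mul_sum]
    exact Finset.sum_congr rfl fun i _ => Finset.sum_congr rfl fun j _ => by ring
  have hsum := hasSum_sum_sum_mul_exp_inner x b c
  have hnonneg (k : ℕ) : 0 ≤ c ^ k / k ! * ∑ p, tensorMoment x b k p ^ 2 := by positivity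
  rw [hQ]
  refine (hsum.nonneg hnonneg).lt_of_ne fun h0 => hb ?_
  rw [← h0, hasSum_zero_iff_of_nonneg hnonneg] at hsum
  obtain ⟨v, hv⟩ := exists_injective_inner hx
  refine eq_zero_of_forall_sum_mul_pow_eq_zero hv fun k => ?_
  have hmoment : ∀ p, tensorMoment x b k p = 0 := by
    have hsq := (mul_eq_zero.mp (congr_fun hsum k)).resolve_left (by positivity)
    simpa [funext_iff] using (Fintype.sum_eq_zero_iff_of_nonneg fun p => sq_nonneg _).mp hsq
  simp [sum_mul_inner_pow, hmoment]

theorem posDef_gaussian {x : ι → EuclideanSpace ℝ κ} (hx : Injective x) {γ : ℝ} (hγ : 0 < γ) :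
    (of fun i j => exp (-γ * ‖x i - x j‖ ^ 2)).PosDef := by
  classical
  let D : Matrix ι ι ℝ := diagonal fun i => exp (-γ * ‖x i‖ ^ 2)
  have hD : Injective D.mulVec :=
    mulVec_injective_iff_isUnit.2 <| isUnit_diagonal.2 <|
      Pi.isUnit_iff.2 fun _ => (exp_pos _).ne'.isUnit
  have hfactor : (of fun i j => exp (-γ * ‖x i - x j‖ ^ 2))
      = Dᴴ * of (fun i j => exp (2 * γ * ⟪x i, x j⟫)) * D := by
    ext i j
    simp only [D, diagonal_conjTranspose, star_trivial, diagonal_mul, mul_diagonal, of_apply,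
      ← exp_add, norm_sub_sq_real]
    ring_nf
  rw [hfactor]
  exact (posDef_exp_inner hx (by positivity)).conjTranspose_mul_mul_same hD

end EuclideanSpace

/-- Gaussian RBF interpolation: for pairwise distinct centers `xᵢ`,
`γ > 0` and arbitrary labels `yⱼ`, there are unique weights `wᵢ` with
`∑ᵢ wᵢ exp (−γ ‖xⱼ − xᵢ‖²) = yⱼ` for every `j`. -/
theorem gaussianRBF_interpolation {n d : ℕ} (x : Fin n → EuclideanSpace ℝ (Fin d))
    (hx : Function.Injective x) (γ : ℝ) (hγ : 0 < γ) (y : Fin n → ℝ) :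
    ∃! w : Fin n → ℝ, ∀ j : Fin n,
      ∑ i : Fin n, w i * Real.exp (-γ * ‖x j - x i‖ ^ 2) = y j := by
  set M : Matrix (Fin n) (Fin n) ℝ := of fun j i => exp (-γ * ‖x j - x i‖ ^ 2)
  have hM : IsUnit M := (EuclideanSpace.posDef_gaussian hx hγ).isUnit
  have hbij : Bijective M.mulVec :=
    ⟨mulVec_injective_iff_isUnit.2 hM, mulVec_surjective_iff_isUnit.2 hM⟩
  refine (existsUnique_congr fun w => ?_).1 (hbij.existsUnique y)
  simp only [funext_iff, M, mulVec, dotProduct, of_apply, mul_comm]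
end

section
/- Let u : ℝ² → ℝ be the mode III crack displacement u(x,y) = Im((x + iy)^{1/2}). Then for every (x,y) with x > 0 or y ≠ 0, the squared gradient norm satisfies (∂u/∂x)² + (∂u/∂y)² = 1/(4·√(x² + y²)); consequently the strain energy density (1/2)·((∂u/∂x)² + (∂u/∂y)²) equals 1/(8·√(x² + y²)) = 1/(8r). -/
/-!
`u = Im √z` is the imaginary part of a holomorphic function, so by the Cauchy–Riemann
equations its partial derivatives are `Im f'` and `Re f'` with `f' = 1 / (2 √z)`; hence
`|∇u|² = |f'|² = 1 / (4 |z|)`.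
-/

/-- The mode III crack displacement `u(x,y) = Im ((x + i y)^(1/2))`, principal branch. -/
noncomputable def crackU (x y : ℝ) : ℝ :=
  (((x : ℂ) + (y : ℂ) * Complex.I) ^ ((1 / 2 : ℂ))).im

open Complex

section CauchyRiemann

variable {f : ℂ → ℂ} {f' : ℂ} {x y : ℝ}

theorem HasDerivAt.im_comp_ofReal_add_mul_I (hf : HasDerivAt f f' (x + y * I)) :
    HasDerivAt (fun s : ℝ => (f (s + y * I)).im) f'.im x := by
  have hline : HasDerivAt (fun s : ℂ => f (s + y * I)) f' x := by
    simpa using hf.comp_add_const (x : ℂ) (y * I)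
  exact imCLM.hasFDerivAt.comp_hasDerivAt x hline.comp_ofReal

theorem HasDerivAt.im_comp_add_ofReal_mul_I (hf : HasDerivAt f f' (x + y * I)) :
    HasDerivAt (fun s : ℝ => (f (x + s * I)).im) f'.re y := by
  have hline : HasDerivAt (fun s : ℂ => f (x + s * I)) (f' * I) y := by
    simpa [Function.comp_def] using
      hf.comp (y : ℂ) (((hasDerivAt_id (y : ℂ)).mul_const I).const_add (x : ℂ))
  simpa [Function.comp_def] using imCLM.hasFDerivAt.comp_hasDerivAt y hline.comp_ofReal

theorem sq_deriv_im_add_sq_deriv_im_eq_sq_norm (hf : HasDerivAt f f' (x + y * I)) :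
    (deriv (fun s : ℝ => (f (s + y * I)).im) x) ^ 2
      + (deriv (fun s : ℝ => (f (x + s * I)).im) y) ^ 2 = ‖f'‖ ^ 2 := by
  rw [hf.im_comp_ofReal_add_mul_I.deriv, hf.im_comp_add_ofReal_mul_I.deriv, ← normSq_eq_norm_sq,
    normSq_apply]
  ring

end CauchyRiemann

theorem sq_norm_half_mul_cpow_neg_half {z : ℂ} (hz : z ≠ 0) :
    ‖(1 / 2 : ℂ) * z ^ ((1 / 2 : ℂ) - 1)‖ ^ 2 = 1 / (4 * ‖z‖) := by
  have hexp : (1 / 2 : ℂ) - 1 = ((-(1 / 2) : ℝ) : ℂ) := by push_cast; norm_num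
  have hzpos : 0 < ‖z‖ := norm_pos_iff.mpr hz
  rw [hexp, norm_mul, norm_cpow_real, mul_pow, ← Real.rpow_natCast (‖z‖ ^ _) 2,
    ← Real.rpow_mul hzpos.le]
  norm_num [Real.rpow_neg_one]
  ring

/-- on the slit plane the squared gradient norm of the crack displacement
is `1/(4 √(x² + y²))`, hence the strain energy density `½ |∇u|²` equals `1/(8 r)`. -/
theorem crackU_energy_density (x y : ℝ) (h : 0 < x ∨ y ≠ 0) :
    (deriv (fun s : ℝ => crackU s y) x) ^ 2 + (deriv (fun s : ℝ => crackU x s) y) ^ 2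
        = 1 / (4 * Real.sqrt (x ^ 2 + y ^ 2)) ∧
    (1 / 2) * ((deriv (fun s : ℝ => crackU s y) x) ^ 2
        + (deriv (fun s : ℝ => crackU x s) y) ^ 2)
        = 1 / (8 * Real.sqrt (x ^ 2 + y ^ 2)) := by
  have hslit : (x + y * I : ℂ) ∈ slitPlane := by simpa [mem_slitPlane_iff] using h
  have hgrad : (deriv (fun s : ℝ => crackU s y) x) ^ 2
      + (deriv (fun s : ℝ => crackU x s) y) ^ 2 = 1 / (4 * Real.sqrt (x ^ 2 + y ^ 2)) := by
    rw [← norm_add_mul_I, ← sq_norm_half_mul_cpow_neg_half (slitPlane_ne_zero hslit)]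
    exact sq_deriv_im_add_sq_deriv_im_eq_sq_norm (hasStrictDerivAt_cpow_const hslit).hasDerivAt
  refine ⟨hgrad, ?_⟩
  rw [hgrad]
  ring
end

section
/- The exact potential energy of the mode III crack problem on the square (−1,1)×(−1,1) has the closed-form value ∫_{[−1,1]×[−1,1]} 1/(8·√(x² + y²)) dx dy = log(1 + √2) (numerically ≈ 0.8814). -/
/-!
Integrate in `y` first: for `x ≠ 0`, `y ↦ arsinh (y / |x|)` is an antiderivative of
`1 / √(x² + y²)`, so the inner integral is `arsinh |x|⁻¹ / 4 = (log (1 + √(1 + x²)) - log |x|) / 4`.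
Both terms are integrable in `x` (the singularity at `0` is only logarithmic); the first has the
elementary antiderivative `x log (1 + √(1 + x²)) - x + arsinh x`, and `∫ log |x|` over `[-1, 1]`
is `-2`, which together give `log (1 + √2)`.
-/

open MeasureTheory Real Set intervalIntegral

lemma sqrt_one_add_div_abs_sq {a : ℝ} (ha : a ≠ 0) (y : ℝ) :
    √(1 + (y / |a|) ^ 2) = √(a ^ 2 + y ^ 2) / |a| := by
  rw [div_pow, sq_abs, one_add_div (pow_ne_zero 2 ha), sqrt_div' _ (sq_nonneg a), sqrt_sq_eq_abs]

lemma hasDerivAt_arsinh_div_abs {a : ℝ} (ha : a ≠ 0) (y : ℝ) :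
    HasDerivAt (fun y => arsinh (y / |a|)) (√(a ^ 2 + y ^ 2))⁻¹ y := by
  refine ((hasDerivAt_arsinh _).comp y ((hasDerivAt_id y).div_const |a|)).congr_deriv ?_
  rw [sqrt_one_add_div_abs_sq ha, id]
  field_simp

lemma integral_inv_sqrt_sq_add_sq {a : ℝ} (ha : a ≠ 0) (b c : ℝ) :
    ∫ y in b..c, (√(a ^ 2 + y ^ 2))⁻¹ = arsinh (c / |a|) - arsinh (b / |a|) := by
  refine integral_eq_sub_of_hasDerivAt (fun y _ => hasDerivAt_arsinh_div_abs ha y) ?_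
  exact (Continuous.inv₀ (by fun_prop) fun y => by positivity).intervalIntegrable _ _

-- `log x` is `log |x|` in Mathlib, so no sign condition on `x` is needed.
lemma arsinh_inv_abs {x : ℝ} (hx : x ≠ 0) : arsinh |x|⁻¹ = log (1 + √(1 + x ^ 2)) - log x := by
  have hsqrt := sqrt_one_add_div_abs_sq hx 1
  rw [one_div, one_pow, add_comm (x ^ 2)] at hsqrt
  rw [arsinh, hsqrt, inv_eq_one_div, ← add_div, log_div (by positivity) (abs_ne_zero.2 hx),
    log_abs]

lemma integral_Icc_one_div_eight_sqrt_sq_add_sq {x : ℝ} (hx : x ≠ 0) :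
    ∫ y in Icc (-1 : ℝ) 1, 1 / (8 * √(x ^ 2 + y ^ 2)) = (log (1 + √(1 + x ^ 2)) - log x) / 4 := by
  rw [integral_Icc_eq_integral_Ioc, ← integral_of_le (neg_le_self zero_le_one)]
  simp only [one_div, mul_inv]
  rw [intervalIntegral.integral_const_mul, integral_inv_sqrt_sq_add_sq hx, neg_div, arsinh_neg,
    one_div, arsinh_inv_abs hx]
  ring

lemma continuous_log_one_add_sqrt_one_add_sq : Continuous fun x : ℝ => log (1 + √(1 + x ^ 2)) :=
  Continuous.log (by fun_prop) fun x => by positivity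

lemma hasDerivAt_antideriv_log_one_add_sqrt_one_add_sq (x : ℝ) :
    HasDerivAt (fun x => x * log (1 + √(1 + x ^ 2)) - x + arsinh x)
      (log (1 + √(1 + x ^ 2))) x := by
  have hs2 : √(1 + x ^ 2) ^ 2 = 1 + x ^ 2 := sq_sqrt (by positivity)
  have hsqrt : HasDerivAt (fun x => √(1 + x ^ 2)) (2 * x / (2 * √(1 + x ^ 2))) x := by
    simpa using ((hasDerivAt_pow 2 x).const_add 1).sqrt (by positivity)
  have hlog := (hsqrt.const_add 1).log (by positivity)
  refine ((((hasDerivAt_id x).mul hlog).sub (hasDerivAt_id x)).add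
    (hasDerivAt_arsinh x)).congr_deriv ?_
  simp only [id]
  field_simp
  linear_combination -hs2

lemma integral_log_one_add_sqrt_one_add_sq_sub_log :
    ∫ x in (-1 : ℝ)..1, (log (1 + √(1 + x ^ 2)) - log x) = 4 * log (1 + √2) := by
  have hcont := continuous_log_one_add_sqrt_one_add_sq
  rw [integral_sub (hcont.intervalIntegrable _ _) intervalIntegrable_log', integral_log,
    integral_eq_sub_of_hasDerivAt (fun x _ => hasDerivAt_antideriv_log_one_add_sqrt_one_add_sq x)
      (hcont.intervalIntegrable _ _)]
  have harsinh_one : arsinh 1 = log (1 + √2) := by norm_num [arsinh]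
  norm_num [arsinh_neg, harsinh_one]
  ring

lemma integrable_prod_of_nonneg {α β : Type*} [MeasurableSpace α] [MeasurableSpace β]
    {μ : Measure α} {ν : Measure β} [SFinite ν] {f : α × β → ℝ} (hf₀ : ∀ z, 0 ≤ f z)
    (hf : AEStronglyMeasurable f (μ.prod ν)) (hsec : ∀ᵐ x ∂μ, Integrable (fun y => f (x, y)) ν)
    (hint : Integrable (fun x => ∫ y, f (x, y) ∂ν) μ) : Integrable f (μ.prod ν) :=
  (integrable_prod_iff hf).2 ⟨hsec, by simpa only [norm_of_nonneg (hf₀ _)] using hint⟩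

/-- the exact potential energy of the mode III crack on the square
`[−1,1] × [−1,1]`: `∫∫ 1/(8 √(x² + y²)) dx dy = log (1 + √2) ≈ 0.8814`. -/
theorem crack_energy_integral :
    ∫ p : ℝ × ℝ in Set.Icc (-1 : ℝ) 1 ×ˢ Set.Icc (-1 : ℝ) 1,
        1 / (8 * Real.sqrt (p.1 ^ 2 + p.2 ^ 2))
      = Real.log (1 + Real.sqrt 2) := by
  set f : ℝ × ℝ → ℝ := fun p => 1 / (8 * √(p.1 ^ 2 + p.2 ^ 2))
  have hne : ∀ᵐ x ∂volume.restrict (Icc (-1 : ℝ) 1), x ≠ 0 :=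
    ae_restrict_of_ae (Measure.ae_ne volume 0)
  have hinner := hne.mono fun x hx => integral_Icc_one_div_eight_sqrt_sq_add_sq hx
  have hf : IntegrableOn f (Icc (-1) 1 ×ˢ Icc (-1) 1) := by
    rw [IntegrableOn, Measure.volume_eq_prod, ← Measure.prod_restrict]
    refine integrable_prod_of_nonneg (fun _ => by positivity) (by fun_prop) ?_ ?_
    · filter_upwards [hne] with x hx
      exact (continuous_const.div (by fun_prop) fun y => by positivity).integrableOn_Icc
    · refine Integrable.congr ?_ (hinner.mono fun _ h => h.symm)
      refine (intervalIntegrable_iff_integrableOn_Icc_of_le (neg_le_self zero_le_one)).1 ?_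
      exact ((continuous_log_one_add_sqrt_one_add_sq.intervalIntegrable _ _).sub
        intervalIntegrable_log').div_const 4
  rw [Measure.volume_eq_prod, setIntegral_prod f hf, integral_congr_ae hinner,
    integral_Icc_eq_integral_Ioc, ← integral_of_le (neg_le_self zero_le_one),
    intervalIntegral.integral_div, integral_log_one_add_sqrt_one_add_sq_sub_log]
  ring
end

section
/- Let a < b, let u : ℝ → ℝ be twice continuously differentiable on ℝ, let f : ℝ → ℝ be continuous, and let v : ℝ → ℝ be continuously differentiable with v(a) = v(b) = 0. Define the potential energy J(w) = ∫_a^b ((1/2)·(w′(x))² − f(x)·w(x)) dx. Then the first variation of J at u in the direction v equals the weighted residual with test function v: the function t ↦ J(u + t·v) has derivative at t = 0 equal to ∫_a^b (−u″(x) − f(x))·v(x) dx. -/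
/-!
Along the line `u + t • v` the energy is a quadratic polynomial in `t`, namely
`J(u) + t ∫ (u' v' - f v) + t² ∫ ½ v'²`, so its derivative at `t = 0` is the linear coefficient
`∫ (u' v' - f v)`. Integrating `u' v'` by parts, with the boundary term killed by
`v a = v b = 0`, turns this into `∫ (-u'' - f) v`.
-/

open MeasureTheory intervalIntegral

theorem hasDerivAt_integral_quadratic {a b : ℝ} {μ : Measure ℝ} {p q r : ℝ → ℝ}
    (hp : IntervalIntegrable p μ a b) (hq : IntervalIntegrable q μ a b)
    (hr : IntervalIntegrable r μ a b) :
    HasDerivAt (fun t => ∫ x in a..b, p x + t * q x + t ^ 2 * r x ∂μ)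
      (∫ x in a..b, q x ∂μ) 0 := by
  have hpoly : (fun t => ∫ x in a..b, p x + t * q x + t ^ 2 * r x ∂μ) = fun t =>
      (∫ x in a..b, p x ∂μ) + t * (∫ x in a..b, q x ∂μ) + t ^ 2 * ∫ x in a..b, r x ∂μ := by
    funext t
    rw [integral_add (hp.add (hq.const_mul t)) (hr.const_mul _), integral_add hp (hq.const_mul t),
      intervalIntegral.integral_const_mul, intervalIntegral.integral_const_mul]
  rw [hpoly]
  simpa using ((hasDerivAt_const (0 : ℝ) _).fun_add ((hasDerivAt_id' (0 : ℝ)).mul_const _)).fun_add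
    ((hasDerivAt_pow 2 (0 : ℝ)).mul_const _)

theorem integral_mul_deriv_eq_neg_of_eq_zero {a b : ℝ} {g g' v v' : ℝ → ℝ}
    (hg : ∀ x ∈ Set.uIcc a b, HasDerivAt g (g' x) x)
    (hv : ∀ x ∈ Set.uIcc a b, HasDerivAt v (v' x) x)
    (hg' : IntervalIntegrable g' volume a b) (hv' : IntervalIntegrable v' volume a b)
    (hva : v a = 0) (hvb : v b = 0) :
    ∫ x in a..b, g x * v' x = -∫ x in a..b, g' x * v x := by
  rw [integral_mul_deriv_eq_deriv_mul hg hv hg' hv', hva, hvb]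
  ring

theorem integral_deriv_mul_deriv_sub_mul_eq_of_eq_zero {a b : ℝ} {u v f : ℝ → ℝ}
    (hu : ContDiff ℝ 2 u) (hf : Continuous f) (hv : ContDiff ℝ 1 v)
    (hva : v a = 0) (hvb : v b = 0) :
    ∫ x in a..b, deriv u x * deriv v x - f x * v x
      = ∫ x in a..b, (-(deriv (deriv u) x) - f x) * v x := by
  have hu' : ContDiff ℝ 1 (deriv u) := hu.deriv'
  have hcu' : Continuous (deriv (deriv u)) := hu'.continuous_deriv le_rfl
  have hcv : Continuous (deriv v) := hv.continuous_deriv le_rfl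
  have hibp : ∫ x in a..b, deriv u x * deriv v x = -∫ x in a..b, deriv (deriv u) x * v x :=
    integral_mul_deriv_eq_neg_of_eq_zero (fun x _ => (hu'.differentiable one_ne_zero x).hasDerivAt)
      (fun x _ => (hv.differentiable one_ne_zero x).hasDerivAt)
      (hcu'.intervalIntegrable a b) (hcv.intervalIntegrable a b) hva hvb
  have hu'v' : IntervalIntegrable (fun x => deriv u x * deriv v x) volume a b :=
    (hu'.continuous.fun_mul hcv).intervalIntegrable a b
  have hu''v : IntervalIntegrable (fun x => -(deriv (deriv u) x * v x)) volume a b :=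
    (hcu'.fun_mul hv.continuous).fun_neg.intervalIntegrable a b
  have hfv : IntervalIntegrable (fun x => f x * v x) volume a b :=
    (hf.fun_mul hv.continuous).intervalIntegrable a b
  simp only [sub_mul, neg_mul]
  rw [integral_sub hu'v' hfv, integral_sub hu''v hfv, intervalIntegral.integral_neg, hibp]

theorem energy_first_variation_general (a b : ℝ) (u v f : ℝ → ℝ)
    (hu : ContDiff ℝ 2 u) (hf : Continuous f) (hv : ContDiff ℝ 1 v)
    (hva : v a = 0) (hvb : v b = 0) :
    HasDerivAt
      (fun t : ℝ => ∫ x in a..b,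
        ((1 / 2) * (deriv (fun s => u s + t * v s) x) ^ 2
          - f x * (u x + t * v x)))
      (∫ x in a..b, (-(deriv (deriv u) x) - f x) * v x) 0 := by
  have hdu : Differentiable ℝ u := hu.differentiable two_ne_zero
  have hdv : Differentiable ℝ v := hv.differentiable one_ne_zero
  have hcu : Continuous (deriv u) := hu.continuous_deriv one_le_two
  have hcv : Continuous (deriv v) := hv.continuous_deriv le_rfl
  have hexpand : ∀ t x, (1 / 2) * deriv (fun s => u s + t * v s) x ^ 2 - f x * (u x + t * v x)
      = ((1 / 2) * deriv u x ^ 2 - f x * u x) + t * (deriv u x * deriv v x - f x * v x)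
        + t ^ 2 * ((1 / 2) * deriv v x ^ 2) := by
    intro t x
    rw [deriv_fun_add (hdu x) ((hdv x).const_mul t), deriv_const_mul_field]
    ring
  simp_rw [hexpand, ← integral_deriv_mul_deriv_sub_mul_eq_of_eq_zero hu hf hv hva hvb]
  exact hasDerivAt_integral_quadratic (Continuous.intervalIntegrable (by fun_prop) a b)
    (Continuous.intervalIntegrable (by fun_prop) a b) (Continuous.intervalIntegrable (by fun_prop) a b)

/-- the first variation of the potential energy
`J(w) = ∫_a^b (½ (w')² − f w)` at `u` in a direction `v` vanishing at the endpoints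
equals the weighted residual `∫_a^b (−u'' − f) v`. -/
theorem energy_first_variation (a b : ℝ) (hab : a < b) (u v f : ℝ → ℝ)
    (hu : ContDiff ℝ 2 u) (hf : Continuous f) (hv : ContDiff ℝ 1 v)
    (hva : v a = 0) (hvb : v b = 0) :
    HasDerivAt
      (fun t : ℝ => ∫ x in a..b,
        ((1 / 2) * (deriv (fun s => u s + t * v s) x) ^ 2
          - f x * (u x + t * v x)))
      (∫ x in a..b, (-(deriv (deriv u) x) - f x) * v x) 0 :=
  energy_first_variation_general a b u v f hu hf hv hva hvb
end
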